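/- Let a, b, c, d ∈ ℝ with c ≠ 0, and define q(x,t) = c·exp(i(ax + bt)) and r(x,t) = i·d·exp(i(ax + bt)). Then (q,r) satisfies the Frobenius NLS system if and only if b + a² − 2c² = 0. -/

import Mathlib

/-! With `E = exp (i (a x + b t))`, both `q = c E` and `r = i d E` are constant multiples of one
plane wave, on which `∂ₜ` acts as `i b`, `∂ₓ²` as `-a²`, and `conj E = E⁻¹` (so `|q|² = c²`).
Each left-hand side of the system therefore collapses to `-(b + a² - 2c²)` times `q`, resp. `r`,
and since `q` never vanishes the system holds exactly when `b + a² - 2c² = 0`. -/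

open Complex

/-- Partial derivative in `x` of a function of `(x,t)`. -/
noncomputable def pX (f : ℝ → ℝ → ℂ) : ℝ → ℝ → ℂ := fun x t => deriv (fun x' => f x' t) x

/-- Partial derivative in `t` of a function of `(x,t)`. -/
noncomputable def pT (f : ℝ → ℝ → ℂ) : ℝ → ℝ → ℂ := fun x t => deriv (fun t' => f x t') t

/-- The Frobenius NLS system:
`i q_t + q_xx + 2 q² conj(q) = 0` and `i r_t + r_xx + 2 q² conj(r) + 4 q conj(q) r = 0`. -/
def FrobeniusNLS (q r : ℝ → ℝ → ℂ) : Prop :=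
  (∀ x t : ℝ, I * pT q x t + pX (pX q) x t + 2 * (q x t) ^ 2 * (starRingEnd ℂ) (q x t) = 0)
  ∧ (∀ x t : ℝ, I * pT r x t + pX (pX r) x t + 2 * (q x t) ^ 2 * (starRingEnd ℂ) (r x t)
      + 4 * q x t * (starRingEnd ℂ) (q x t) * r x t = 0)

theorem HasDerivAt.const_mul_cexp_I_mul_ofReal {g : ℝ → ℝ} {g' s : ℝ} (hg : HasDerivAt g g' s)
    (A : ℂ) :
    HasDerivAt (fun s => A * Complex.exp (I * (g s : ℂ)))
      (I * g' * A * Complex.exp (I * g s)) s :=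
  ((hg.ofReal_comp.const_mul I).cexp.const_mul A).congr_deriv (by ring)

noncomputable def planeWave (a b x t : ℝ) : ℂ := exp (I * ((a * x + b * t : ℝ) : ℂ))

section PlaneWave

variable (a b : ℝ)

theorem planeWave_ne_zero (x t : ℝ) : planeWave a b x t ≠ 0 := exp_ne_zero _

theorem conj_planeWave (x t : ℝ) : starRingEnd ℂ (planeWave a b x t) = (planeWave a b x t)⁻¹ := by
  rw [planeWave, ← exp_conj, ← exp_neg, map_mul, conj_I, conj_ofReal, neg_mul]

theorem pX_const_mul_planeWave (A : ℂ) :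
    pX (fun x t => A * planeWave a b x t) = fun x t => I * a * A * planeWave a b x t := by
  ext x t
  exact (HasDerivAt.const_mul_cexp_I_mul_ofReal
    (((hasDerivAt_id x).const_mul a).add_const (b * t)) A).deriv.trans (by simp [planeWave])

theorem pT_const_mul_planeWave (A : ℂ) :
    pT (fun x t => A * planeWave a b x t) = fun x t => I * b * A * planeWave a b x t := by
  ext x t
  exact (HasDerivAt.const_mul_cexp_I_mul_ofReal
    (((hasDerivAt_id t).const_mul b).const_add (a * x)) A).deriv.trans (by simp [planeWave])

theorem pX_pX_const_mul_planeWave (A : ℂ) :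
    pX (pX (fun x t => A * planeWave a b x t)) = fun x t => -a ^ 2 * A * planeWave a b x t := by
  ext x t
  rw [pX_const_mul_planeWave, pX_const_mul_planeWave]
  linear_combination (a ^ 2 * A * planeWave a b x t) * I_sq

end PlaneWave

section PlaneWaveSeed

variable (a b c d x t : ℝ)

theorem frobeniusNLS_fst_planeWave :
    I * pT (fun x t => c * planeWave a b x t) x t + pX (pX fun x t => c * planeWave a b x t) x t
      + 2 * (c * planeWave a b x t) ^ 2 * starRingEnd ℂ (c * planeWave a b x t)
      = -((b + a ^ 2 - 2 * c ^ 2 : ℝ) : ℂ) * (c * planeWave a b x t) := by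
  rw [pT_const_mul_planeWave, pX_pX_const_mul_planeWave, map_mul, conj_ofReal,
    conj_planeWave]
  push_cast
  linear_combination (c * b * planeWave a b x t) * I_sq
    + 2 * c ^ 3 * planeWave a b x t * mul_inv_cancel₀ (planeWave_ne_zero a b x t)

theorem frobeniusNLS_snd_planeWave :
    I * pT (fun x t => I * d * planeWave a b x t) x t
      + pX (pX fun x t => I * d * planeWave a b x t) x t
      + 2 * (c * planeWave a b x t) ^ 2 * starRingEnd ℂ (I * d * planeWave a b x t)
      + 4 * (c * planeWave a b x t) * starRingEnd ℂ (c * planeWave a b x t)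
        * (I * d * planeWave a b x t)
      = -((b + a ^ 2 - 2 * c ^ 2 : ℝ) : ℂ) * (I * d * planeWave a b x t) := by
  rw [pT_const_mul_planeWave, pX_pX_const_mul_planeWave, map_mul, map_mul, map_mul, conj_ofReal,
    conj_ofReal, conj_I, conj_planeWave]
  push_cast
  linear_combination (I * d * b * planeWave a b x t) * I_sq
    + 2 * I * d * c ^ 2 * planeWave a b x t * mul_inv_cancel₀ (planeWave_ne_zero a b x t)

end PlaneWaveSeed

theorem statement10 (a b c d : ℝ) (hc : c ≠ 0) (q r : ℝ → ℝ → ℂ)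
    (hq : ∀ x t : ℝ, q x t = (c : ℂ) * Complex.exp (I * ((a * x + b * t : ℝ) : ℂ)))
    (hr : ∀ x t : ℝ, r x t = I * (d : ℂ) * Complex.exp (I * ((a * x + b * t : ℝ) : ℂ))) :
    FrobeniusNLS q r ↔ b + a ^ 2 - 2 * c ^ 2 = 0 := by
  obtain rfl : q = fun x t => c * planeWave a b x t := funext₂ hq
  obtain rfl : r = fun x t => I * d * planeWave a b x t := funext₂ hr
  simp only [FrobeniusNLS, frobeniusNLS_fst_planeWave, frobeniusNLS_snd_planeWave]
  constructor
  · rintro ⟨hq0, -⟩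
    simpa only [neg_mul, neg_eq_zero, mul_eq_zero, ofReal_eq_zero, hc, planeWave_ne_zero,
      or_self, or_false] using hq0 0 0
  · intro h
    simp only [h, ofReal_zero, neg_zero, zero_mul, implies_true, and_self]
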